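/- For all i ≥ 0 and all r > 0, the reverse Bessel polynomial satisfies χ_i(r) = e^r · r^{2i} · ψ_i(r), where ψ_i is defined by ψ_0(r) = e^{-r} and ψ_{i+1}(r) = -(1/r)ψ_i'(r). -/

import Mathlib

/-- The reverse Bessel polynomials. -/
noncomputable def chi : ℕ → Polynomial ℤ
  | 0 => 1
  | 1 => Polynomial.X
  | (i+2) => Polynomial.X ^ 2 * chi i + Polynomial.C (2 * (i : ℤ) + 1) * chi (i+1)

/-- ψ₀(r) = e^{-r}, ψ_{i+1}(r) = -(1/r)·ψ_i'(r). -/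
noncomputable def psi : ℕ → ℝ → ℝ
  | 0 => fun r => Real.exp (-r)
  | (i+1) => fun r => -(1/r) * deriv (psi i) r

/-!
Writing `ψ_i(r) = e^{-r} p(r) / r^{2i}` for a polynomial `p`, the rule `ψ ↦ -(1/r) ψ'` becomes
`p ↦ (X + 2i) p - X p'` on the numerator. So it suffices that the reverse Bessel polynomials obey
this first-order recursion, `χ_{i+1} = (X + 2i) χ_i - X χ_i'`, which follows from their three-term
recursion by induction.
-/

open Polynomial

lemma chi_add_two (i : ℕ) : chi (i + 2) = X ^ 2 * chi i + C (2 * (i : ℤ) + 1) * chi (i + 1) := by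
  rw [chi]

lemma chi_succ : ∀ i : ℕ, chi (i + 1) = (X + C (2 * (i : ℤ))) * chi i - X * derivative (chi i)
  | 0 => by simp [chi]
  | 1 => by simp [chi]; ring
  | i + 2 => by
    have h₀ := chi_succ i
    have h₁ : chi (i + 1 + 1) = _ := chi_succ (i + 1)
    have h₂ : chi (i + 1 + 1) = _ := chi_add_two i
    rw [chi_add_two (i + 1), congrArg derivative (chi_add_two i), derivative_add, derivative_mul,
      derivative_C_mul]
    simp only [derivative_X_pow, Nat.cast_add, Nat.cast_one, Nat.cast_ofNat,
      C_add, C_mul, C_1, map_ofNat] at h₀ h₁ h₂ ⊢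
    linear_combination
      (X : ℤ[X]) ^ 2 * h₀ + (2 * C (i : ℤ) + 1) * h₁ - (X + 2 * C (i : ℤ) + 2) * h₂

lemma hasDerivAt_exp_neg_mul_aeval_div_pow {R : Type*} [CommRing R] [Algebra R ℝ]
    (p : R[X]) (n : ℕ) {r : ℝ} (hr : r ≠ 0) :
    HasDerivAt (fun x => Real.exp (-x) * aeval x p / x ^ n)
      (-(Real.exp (-r) * aeval r ((X + C (n : R)) * p - X * derivative p) / r ^ (n + 1))) r := by
  have hexp : HasDerivAt (fun x : ℝ => Real.exp (-x)) (-Real.exp (-r)) r := by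
    simpa using (hasDerivAt_neg r).exp
  refine ((hexp.mul (p.hasDerivAt_aeval r)).div (hasDerivAt_pow n r) (pow_ne_zero n hr)).congr_deriv
    ?_
  simp only [map_sub, map_mul, map_add, aeval_X, map_natCast, Pi.mul_apply]
  rcases n with _ | n
  · field_simp
    ring
  · rw [Nat.add_sub_cancel]
    field_simp
    ring

lemma psi_eq_exp_neg_mul_aeval_div_pow (i : ℕ) {r : ℝ} (hr : 0 < r) :
    psi i r = Real.exp (-r) * aeval r (chi i) / r ^ (2 * i) := by
  induction i generalizing r with
  | zero => simp [psi, chi]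
  | succ i ih =>
    have hpsi : psi i =ᶠ[nhds r] fun x => Real.exp (-x) * aeval x (chi i) / x ^ (2 * i) :=
      eventually_gt_nhds hr |>.mono fun x hx => ih hx
    have hderiv : HasDerivAt (psi i) _ r :=
      (hasDerivAt_exp_neg_mul_aeval_div_pow (chi i) (2 * i) hr.ne').congr_of_eventuallyEq hpsi
    simp only [psi]
    rw [hderiv.deriv, chi_succ]
    push_cast
    field_simp
    ring

theorem chi_eq_exp_rpow_psi (i : ℕ) (r : ℝ) (hr : 0 < r) :
    (Polynomial.aeval r (chi i) : ℝ) = Real.exp r * r ^ (2 * i) * psi i r := by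
  rw [psi_eq_exp_neg_mul_aeval_div_pow i hr, Real.exp_neg]
  field_simp
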